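/- arXiv:1912.08982 — 4 statements merged into one kernel-verified Lean document; each statement's English description precedes it below -/
import Mathlib

section
/- Let R be an integral domain and C̃ an S-complex over R. Then: (1) h(C̃) > 0 if and only if there exists α ∈ C_* with d(α) = 0 and δ₁(α) ≠ 0. (2) If h(C̃) = k for a positive integer k, then k is the largest integer such that there exists α ∈ C_* satisfying d(α) = 0, δ₁v^{k−1}(α) ≠ 0, and δ₁vⁱ(α) = 0 for all 0 ≤ i ≤ k−2. (3) If h(C̃) = k for a non-positive integer k, then k is the largest integer such that there exist elements a₀, …, a₋ₖ ∈ R and α ∈ C_* with d(α) = Σ_{i=0}^{−k} vⁱδ₂(aᵢ) and a₋ₖ ≠ 0. -/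
/-!  S-complexes over a commutative ring `R` (following Daemi–Scaduto).

An S-complex is a ℤ-graded finitely generated free chain complex
`C̃ = C ⊕ C[1] ⊕ R` determined by the data of `C` together with maps
`d, v, δ₁, δ₂`.  We encode the graded module `C` by a single module `Tot`
together with an internal ℤ-grading by submodules, and we carry the sign
map `ε` (multiplication by `(-1)^i` on the degree `i` part) as data. -/

universe u

/-- The data of an S-complex over `R`: a module `Tot` (the total module of the
ℤ-graded module `C_*`), its grading, the sign map `ε`, and the structure maps
`d : C_* → C_{*-1}`, `v : C_* → C_{*-2}`, `δ₁ : C_* → R` (supported in degree 1),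
`δ₂ : R → C_{-2}`. -/
structure SComplexData (R : Type u) [CommRing R] where
  Tot : Type u
  [acg : AddCommGroup Tot]
  [mod : Module R Tot]
  grading : ℤ → Submodule R Tot
  sign : Tot →ₗ[R] Tot
  d : Tot →ₗ[R] Tot
  v : Tot →ₗ[R] Tot
  δ₁ : Tot →ₗ[R] R
  δ₂ : R →ₗ[R] Tot

attribute [instance] SComplexData.acg SComplexData.mod

namespace SComplexData

variable {R : Type u} [CommRing R]

/-- The axioms making the data of `X : SComplexData R` into a genuine S-complex:
the grading is an internal direct sum decomposition into finitely generated free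
pieces, the sign map is `(-1)^i` on the degree `i` piece, the structure maps are
graded of the appropriate degrees (`δ₁` supported on `C_1`, `δ₂` valued in `C_{-2}`),
and the S-complex relations `d∘d = 0`, `δ₁∘d = 0`, `d∘δ₂ = 0`,
`d∘v − v∘d − δ₂∘δ₁ = 0` hold; the latter are equivalent to `d̃ ∘ d̃ = 0` for the
differential `d̃(α, β, r) = (dα, vα − dβ + δ₂ r, δ₁ α)` on `C̃ = C ⊕ C[1] ⊕ R`. -/
structure IsSComplex (X : SComplexData R) : Prop where
  internal : DirectSum.IsInternal X.grading
  free : ∀ i : ℤ, Module.Free R ↥(X.grading i)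
  finite : Module.Finite R X.Tot
  sign_spec : ∀ i : ℤ, ∀ x ∈ X.grading i, X.sign x = if Even i then x else -x
  d_deg : ∀ i : ℤ, (X.grading i).map X.d ≤ X.grading (i - 1)
  v_deg : ∀ i : ℤ, (X.grading i).map X.v ≤ X.grading (i - 2)
  δ₁_deg : ∀ i : ℤ, i ≠ 1 → ∀ x ∈ X.grading i, X.δ₁ x = 0
  δ₂_deg : LinearMap.range X.δ₂ ≤ X.grading (-2)
  d_d : X.d ∘ₗ X.d = 0
  δ₁_d : X.δ₁ ∘ₗ X.d = 0
  d_δ₂ : X.d ∘ₗ X.δ₂ = 0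
  d_v : X.d ∘ₗ X.v - X.v ∘ₗ X.d - X.δ₂ ∘ₗ X.δ₁ = 0

/-- A morphism of S-complexes `λ̃ : C̃ → C̃'`, i.e. a degree-0 chain map
`λ̃(α, β, r) = (λ α, μ α + λ β + Δ₂ r, Δ₁ α + r)`, recorded through its
components `λ, μ, Δ₁, Δ₂` (here `l` stands for `λ`). -/
structure SMorphism (X Y : SComplexData R) where
  l : X.Tot →ₗ[R] Y.Tot
  μ : X.Tot →ₗ[R] Y.Tot
  Δ₁ : X.Tot →ₗ[R] R
  Δ₂ : R →ₗ[R] Y.Tot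
  l_deg : ∀ i : ℤ, (X.grading i).map l ≤ Y.grading i
  μ_deg : ∀ i : ℤ, (X.grading i).map μ ≤ Y.grading (i - 1)
  Δ₁_deg : ∀ i : ℤ, i ≠ 0 → ∀ x ∈ X.grading i, Δ₁ x = 0
  Δ₂_deg : LinearMap.range Δ₂ ≤ Y.grading (-1)
  comm_d : l ∘ₗ X.d = Y.d ∘ₗ l
  comm_δ₁ : Δ₁ ∘ₗ X.d + X.δ₁ = Y.δ₁ ∘ₗ l
  comm_δ₂ : Y.d ∘ₗ Δ₂ + l ∘ₗ X.δ₂ = Y.δ₂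
  comm_v : μ ∘ₗ X.d + Y.d ∘ₗ μ + l ∘ₗ X.v - Y.v ∘ₗ l + Δ₂ ∘ₗ X.δ₁ - Y.δ₂ ∘ₗ Δ₁ = 0

end SComplexData

/-- Functions `ℕ → M` with finitely many nonzero values (i.e. support bounded
above); this realizes the polynomial module `M[x]`. -/
def NatBdd (R : Type u) [CommRing R] (M : Type u) [AddCommGroup M] [Module R M] :
    Submodule R (ℕ → M) where
  carrier := {f | ∃ N : ℕ, ∀ n : ℕ, N < n → f n = 0}
  add_mem' := by
    rintro f g ⟨N, hN⟩ ⟨K, hK⟩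
    refine ⟨max N K, fun n hn => ?_⟩
    have h1 := hN n (lt_of_le_of_lt (le_max_left N K) hn)
    have h2 := hK n (lt_of_le_of_lt (le_max_right N K) hn)
    show f n + g n = 0
    rw [h1, h2, add_zero]
  zero_mem' := ⟨0, fun _ _ => rfl⟩
  smul_mem' := by
    rintro c f ⟨N, hN⟩
    refine ⟨N, fun n hn => ?_⟩
    show c • f n = 0
    rw [hN n hn, smul_zero]

/-- Functions `ℤ → M` with support bounded above; for `M = R` this realizes the
ring `R[[x⁻¹, x]]` of Laurent series with finitely many positive powers of `x`. -/
def IntBdd (R : Type u) [CommRing R] (M : Type u) [AddCommGroup M] [Module R M] :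
    Submodule R (ℤ → M) where
  carrier := {f | ∃ N : ℤ, ∀ n : ℤ, N < n → f n = 0}
  add_mem' := by
    rintro f g ⟨N, hN⟩ ⟨K, hK⟩
    refine ⟨max N K, fun n hn => ?_⟩
    have h1 := hN n (lt_of_le_of_lt (le_max_left N K) hn)
    have h2 := hK n (lt_of_le_of_lt (le_max_right N K) hn)
    show f n + g n = 0
    rw [h1, h2, add_zero]
  zero_mem' := ⟨0, fun _ _ => rfl⟩
  smul_mem' := by
    rintro c f ⟨N, hN⟩
    refine ⟨N, fun n hn => ?_⟩
    show c • f n = 0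
    rw [hN n hn, smul_zero]

/-- The multiplication of `R[[x⁻¹, x]]`, realized as a convolution product on
functions `ℤ → R` with support bounded above. -/
noncomputable def lmul {R : Type u} [CommRing R] (f g : ↥(IntBdd R R)) : ↥(IntBdd R R) :=
  ⟨fun n => ∑ᶠ i : ℤ, f.1 i * g.1 (n - i), by
    obtain ⟨N, hN⟩ := f.2
    obtain ⟨K, hK⟩ := g.2
    refine ⟨N + K, fun n hn => ?_⟩
    apply finsum_eq_zero_of_forall_eq_zero
    intro i
    by_cases h : N < i
    · rw [hN i h, zero_mul]
    · rw [hK (n - i) (by omega), mul_zero]⟩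

namespace SComplexData

variable {R : Type u} [CommRing R]

/-- The carrier of the small equivariant complex `𝔣Ĉ_* = C_{*-1} ⊕ R[x]`,
with `R[x]` realized as finitely supported functions `ℕ → R`. -/
abbrev Small (X : SComplexData R) : Type u := X.Tot × ↥(NatBdd R R)

/-- `Σᵢ vⁱ δ₂(aᵢ)` for a polynomial with coefficients `aᵢ`. -/
noncomputable def sumV (X : SComplexData R) (f : ↥(NatBdd R R)) : X.Tot :=
  ∑ᶠ i : ℕ, (X.v ^ i) (X.δ₂ (f.1 i))

/-- The differential `𝔡̂(α, Σᵢ aᵢxⁱ) = (dα − Σᵢ vⁱδ₂(aᵢ), 0)` of the small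
equivariant complex. -/
noncomputable def smallD (X : SComplexData R) : X.Small → X.Small :=
  fun z => (X.d z.1 - X.sumV z.2, 0)

/-- The `R[x]`-module structure of the small equivariant complex:
`x · (α, p(x)) = (v(α), δ₁(α) + x·p(x))`; this is the action of `x`. -/
noncomputable def xSmall (X : SComplexData R) : X.Small → X.Small :=
  fun z => (X.v z.1, ⟨fun n => if n = 0 then X.δ₁ z.1 else z.2.1 (n - 1), by
    obtain ⟨N, hN⟩ := z.2.2
    refine ⟨N + 1, fun n hn => ?_⟩
    show (if n = 0 then X.δ₁ z.1 else z.2.1 (n - 1)) = 0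
    rw [if_neg (by omega)]
    exact hN (n - 1) (by omega)⟩)

/-- The map `𝔦 : 𝔣Ĉ_* → R[[x⁻¹, x]]`,
`𝔦(α, Σᵢ aᵢxⁱ) = Σ_{i ≤ −1} δ₁v^{−i−1}(α) xⁱ + Σᵢ aᵢxⁱ`. -/
noncomputable def iota (X : SComplexData R) : X.Small → ↥(IntBdd R R) :=
  fun z => ⟨fun n => if n < 0 then X.δ₁ ((X.v ^ (-n - 1).toNat) z.1) else z.2.1 n.toNat, by
    obtain ⟨N, hN⟩ := z.2.2
    refine ⟨(N : ℤ), fun n hn => ?_⟩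
    show (if n < 0 then X.δ₁ ((X.v ^ (-n - 1).toNat) z.1) else z.2.1 n.toNat) = 0
    rw [if_neg (by omega)]
    exact hN n.toNat (by omega)⟩

/-- `𝔍(C̃) = 𝔦(ker 𝔡̂)`, an `R[x]`-submodule of `R[[x⁻¹, x]]`, here recorded
as a set. -/
noncomputable def JJ (X : SComplexData R) : Set ↥(IntBdd R R) :=
  X.iota '' {z | X.smallD z = 0}

/-- `DegEq Q n` means that the Laurent series `Q` is nonzero with `Deg Q = n`,
i.e. `n` is the largest exponent with nonzero coefficient. -/
def DegEq {R : Type u} [CommRing R] (Q : ↥(IntBdd R R)) (n : ℤ) : Prop :=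
  Q.1 n ≠ 0 ∧ ∀ m : ℤ, n < m → Q.1 m = 0

/-- The set of degrees of nonzero elements of `𝔍(C̃)`. -/
noncomputable def degSet (X : SComplexData R) : Set ℤ :=
  {n : ℤ | ∃ Q ∈ X.JJ, DegEq Q n}

/-- The Frøyshov invariant `h(C̃) = −inf {Deg Q : 0 ≠ Q ∈ 𝔍(C̃)}`. -/
noncomputable def hInv (X : SComplexData R) : ℤ := -sInf X.degSet

/-- The ideal `J_i(C̃) = {a ∈ R : ∃ Q = a·x^{−i} + (lower order terms) ∈ 𝔍(C̃)}`,
recorded as a set. -/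
noncomputable def Jideal (X : SComplexData R) (i : ℤ) : Set R :=
  {a : R | ∃ Q ∈ X.JJ, (∀ m : ℤ, -i < m → Q.1 m = 0) ∧ Q.1 (-i) = a}

end SComplexData

/-! Since `v` lowers the degree by two and the grading of `C_*` has finite support, `v` is
nilpotent. Hence `𝔍(C̃)` contains an element of degree `N` (coming from `xᴺ`, as `vᴺδ₂ = 0`)
and no nonzero element of degree `< -N`, so the infimum defining `h` is attained. An
element of `ker 𝔡̂` with `𝔦`-image of degree `-m < 0` has no polynomial part, i.e. it is a
cycle `α` whose first nonvanishing `δ₁vⁱα` is at `i = m - 1`; one of degree `-m ≥ 0` is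
exactly a relation `dα = Σ_{i ≤ -m} vⁱδ₂(aᵢ)` with `a₋ₘ ≠ 0`. -/

theorem DirectSum.IsInternal.exists_finset_eq_bot {ι R M : Type*} [DecidableEq ι] [Semiring R]
    [AddCommMonoid M] [Module R M] [Module.Finite R M] {A : ι → Submodule R M}
    (hA : DirectSum.IsInternal A) : ∃ s : Finset ι, ∀ i ∉ s, A i = ⊥ := by
  obtain ⟨s, hs⟩ := CompleteLattice.IsCompactElement.exists_finset_of_le_iSup _
    ((Submodule.fg_iff_compact _).mp Module.Finite.fg_top) A hA.submodule_iSup_eq_top.ge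
  refine ⟨s, fun i hi => ?_⟩
  have hdisj : Disjoint (A i) (⨆ j ∈ (s : Set ι), A j) :=
    hA.submodule_iSupIndep.disjoint_biSup (by simpa using hi)
  exact hdisj.eq_bot_of_le (le_top.trans (by simpa using hs))

namespace SComplexData

variable {R : Type u} [CommRing R] {X : SComplexData R}

namespace IsSComplex

theorem v_pow_mem_grading (hX : X.IsSComplex) (j : ℕ) {i : ℤ} {x : X.Tot}
    (hx : x ∈ X.grading i) : (X.v ^ j) x ∈ X.grading (i - 2 * j) := by
  induction j generalizing i x with
  | zero => simpa using hx
  | succ j ih =>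
    rw [pow_succ, Module.End.mul_apply, Nat.cast_succ,
      show i - 2 * (j + 1) = i - 2 - 2 * j by ring]
    exact ih (hX.v_deg i (Submodule.mem_map_of_mem hx))

theorem isNilpotent_v (hX : X.IsSComplex) : IsNilpotent X.v := by
  have := hX.finite
  obtain ⟨s, hs⟩ := hX.internal.exists_finset_eq_bot
  set M := s.sup Int.natAbs
  refine ⟨M + 1, ?_⟩
  have hker : ∀ i, X.grading i ≤ LinearMap.ker (X.v ^ (M + 1)) := by
    intro i x hx
    by_cases hi : i ∈ s
    · have hout : i - 2 * ((M + 1 : ℕ) : ℤ) ∉ s := fun hout => by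
        have h1 : i.natAbs ≤ M := Finset.le_sup hi
        have h2 : (i - 2 * ((M + 1 : ℕ) : ℤ)).natAbs ≤ M := Finset.le_sup hout
        omega
      have hmem := hX.v_pow_mem_grading (M + 1) hx
      rwa [hs _ hout, Submodule.mem_bot] at hmem
    · rw [hs i hi, Submodule.mem_bot] at hx
      simp [hx]
  rw [← LinearMap.ker_eq_top, eq_top_iff, ← hX.internal.submodule_iSup_eq_top]
  exact iSup_le hker

theorem d_v_apply (hX : X.IsSComplex) (α : X.Tot) :
    X.d (X.v α) = X.v (X.d α) + X.δ₂ (X.δ₁ α) := by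
  have h := LinearMap.congr_fun hX.d_v α
  simp only [LinearMap.sub_apply, LinearMap.comp_apply, LinearMap.zero_apply] at h
  rwa [sub_sub, sub_eq_zero] at h

theorem d_v_pow_eq_zero (hX : X.IsSComplex) {α : X.Tot} (hd : X.d α = 0) (m : ℕ)
    (h : ∀ i < m, X.δ₁ ((X.v ^ i) α) = 0) : X.d ((X.v ^ m) α) = 0 := by
  induction m with
  | zero => simpa using hd
  | succ m ih =>
    rw [pow_succ', Module.End.mul_apply, hX.d_v_apply, ih fun i hi => h i (by omega),
      h m m.lt_succ_self, map_zero, map_zero, add_zero]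

end IsSComplex

theorem smallD_eq_zero_iff {z : X.Small} : X.smallD z = 0 ↔ X.d z.1 = X.sumV z.2 := by
  simp [smallD, Prod.ext_iff, sub_eq_zero]

theorem iota_apply_of_neg (z : X.Small) {n : ℤ} (hn : n < 0) :
    (X.iota z).1 n = X.δ₁ ((X.v ^ (-n - 1).toNat) z.1) :=
  if_pos hn

theorem iota_apply_of_nonneg (z : X.Small) {n : ℤ} (hn : 0 ≤ n) :
    (X.iota z).1 n = z.2.1 n.toNat :=
  if_neg (not_lt.mpr hn)

theorem sumV_eq_sum_range (f : ↥(NatBdd R R)) (N : ℕ) (hf : ∀ i, N < i → f.1 i = 0) :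
    X.sumV f = ∑ i ∈ Finset.range (N + 1), (X.v ^ i) (X.δ₂ (f.1 i)) := by
  refine finsum_eq_finsetSum_of_support_subset _ fun i hi => ?_
  by_contra h
  simp only [Finset.coe_range, Set.mem_Iio, not_lt] at h
  exact hi (show (X.v ^ i) (X.δ₂ (f.1 i)) = 0 by rw [hf i (by omega), map_zero, map_zero])

theorem sumV_zero : X.sumV (0 : ↥(NatBdd R R)) = 0 :=
  finsum_eq_zero_of_forall_eq_zero fun i => by
    change (X.v ^ i) (X.δ₂ 0) = 0
    rw [map_zero, map_zero]

theorem neg_mem_degSet_iff_of_pos {m : ℤ} (hm : 0 < m) :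
    -m ∈ X.degSet ↔ ∃ α : X.Tot, X.d α = 0 ∧ X.δ₁ ((X.v ^ (m - 1).toNat) α) ≠ 0 ∧
      ∀ i : ℕ, (i : ℤ) ≤ m - 2 → X.δ₁ ((X.v ^ i) α) = 0 := by
  constructor
  · rintro ⟨_, ⟨z, hz, rfl⟩, hlead, hhigh⟩
    have hpoly : z.2 = 0 := Subtype.ext <| funext fun j => by
      simpa [iota_apply_of_nonneg] using hhigh j (by omega)
    refine ⟨z.1, ?_, ?_, fun i hi => ?_⟩
    · rw [smallD_eq_zero_iff.mp hz, hpoly, sumV_zero]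
    · rwa [iota_apply_of_neg _ (by omega), neg_neg] at hlead
    · have h := hhigh (-i - 1) (by omega)
      rwa [iota_apply_of_neg _ (by omega), show (-(-(i : ℤ) - 1) - 1).toNat = i by omega] at h
  · rintro ⟨α, hd, hlead, hlow⟩
    refine ⟨X.iota (α, 0), ⟨(α, 0), smallD_eq_zero_iff.mpr (hd.trans sumV_zero.symm), rfl⟩,
      ?_, fun n hn => ?_⟩
    · rwa [iota_apply_of_neg _ (by omega), neg_neg]
    · rcases lt_or_ge n 0 with hn0 | hn0
      · rw [iota_apply_of_neg _ hn0]
        exact hlow _ (by omega)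
      · rw [iota_apply_of_nonneg _ hn0]
        rfl

theorem neg_mem_degSet_iff_of_nonpos {m : ℤ} (hm : m ≤ 0) :
    -m ∈ X.degSet ↔ ∃ (a : ℕ → R) (α : X.Tot),
      X.d α = ∑ i ∈ Finset.range ((-m).toNat + 1), (X.v ^ i) (X.δ₂ (a i)) ∧
        a (-m).toNat ≠ 0 := by
  constructor
  · rintro ⟨_, ⟨z, hz, rfl⟩, hlead, hhigh⟩
    refine ⟨z.2.1, z.1, ?_, by rwa [iota_apply_of_nonneg _ (by omega)] at hlead⟩
    rw [smallD_eq_zero_iff.mp hz]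
    refine sumV_eq_sum_range z.2 _ fun i hi => ?_
    simpa [iota_apply_of_nonneg] using hhigh i (by omega)
  · rintro ⟨a, α, hd, hlead⟩
    let p : ↥(NatBdd R R) :=
      ⟨fun i => if i ≤ (-m).toNat then a i else 0, (-m).toNat, fun i hi => if_neg (by omega)⟩
    refine ⟨X.iota (α, p), ⟨(α, p), smallD_eq_zero_iff.mpr ?_, rfl⟩, ?_, fun n hn => ?_⟩
    · rw [sumV_eq_sum_range p (-m).toNat fun i hi => if_neg (by omega), hd]
      refine Finset.sum_congr rfl fun i hi => ?_
      rw [Finset.mem_range, Nat.lt_succ_iff] at hi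
      simp only [p, if_pos hi]
    · rw [iota_apply_of_nonneg _ (by omega)]
      simpa only [p, if_pos le_rfl] using hlead
    · rw [iota_apply_of_nonneg _ (by omega)]
      exact if_neg (by omega)

theorem isLeast_degSet [Nontrivial R] (hX : X.IsSComplex) : IsLeast X.degSet (-X.hInv) := by
  obtain ⟨N, hN⟩ := hX.isNilpotent_v
  have hmem : (N : ℤ) ∈ X.degSet := by
    rw [← neg_neg (N : ℤ), neg_mem_degSet_iff_of_nonpos (by omega), neg_neg, Int.toNat_natCast]
    refine ⟨Pi.single N 1, 0, ?_, by simp⟩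
    rw [Finset.sum_eq_single_of_mem N (Finset.self_mem_range_succ N) fun i _ hi => by simp [hi],
      hN, map_zero, Pi.single_eq_same, LinearMap.zero_apply]
  have hbdd : -(N : ℤ) ∈ lowerBounds X.degSet := by
    rintro n ⟨_, ⟨z, -, rfl⟩, hlead, -⟩
    by_contra hn
    rw [iota_apply_of_neg _ (by omega),
      pow_eq_zero_of_le (show N ≤ (-n - 1).toNat by omega) hN] at hlead
    exact hlead (by simp)
  rw [hInv, neg_neg]
  exact ⟨Int.csInf_mem ⟨_, hmem⟩ ⟨_, hbdd⟩, fun n hn => csInf_le ⟨_, hbdd⟩ hn⟩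

end SComplexData

open SComplexData in
/-- **Statement 2.** Characterization of the Frøyshov invariant `h` of an
S-complex over an integral domain, in terms of the maps `d, v, δ₁, δ₂`. -/
theorem statement2 {R : Type u} [CommRing R] [IsDomain R]
    (A : SComplexData R) (hA : A.IsSComplex) :
    (0 < A.hInv ↔ ∃ α : A.Tot, A.d α = 0 ∧ A.δ₁ α ≠ 0) ∧
    (∀ k : ℤ, 0 < k → A.hInv = k →
      IsGreatest {m : ℤ | ∃ α : A.Tot, A.d α = 0 ∧
        A.δ₁ ((A.v ^ (m - 1).toNat) α) ≠ 0 ∧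
        ∀ i : ℕ, (i : ℤ) ≤ m - 2 → A.δ₁ ((A.v ^ i) α) = 0} k) ∧
    (∀ k : ℤ, k ≤ 0 → A.hInv = k →
      IsGreatest {m : ℤ | m ≤ 0 ∧ ∃ (a : ℕ → R) (α : A.Tot),
        A.d α = ∑ i ∈ Finset.range ((-m).toNat + 1), (A.v ^ i) (A.δ₂ (a i)) ∧
        a ((-m).toNat) ≠ 0} k) := by
  obtain ⟨hmin, hlb⟩ := isLeast_degSet hA
  have le_hInv {m : ℤ} (hm : -m ∈ A.degSet) : m ≤ A.hInv := neg_le_neg_iff.mp (hlb hm)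
  refine ⟨⟨fun hpos => ?_, fun ⟨α, hd, hδ⟩ => ?_⟩, fun k hk hkh => ?_, fun k hk hkh => ?_⟩
  · obtain ⟨α, hd, hlead, hlow⟩ := (neg_mem_degSet_iff_of_pos hpos).mp hmin
    exact ⟨_, hA.d_v_pow_eq_zero hd _ fun i hi => hlow i (by omega), hlead⟩
  · exact le_hInv <| (neg_mem_degSet_iff_of_pos one_pos).mpr
      ⟨α, hd, by simpa using hδ, fun i hi => absurd hi (by omega)⟩
  · subst hkh
    refine ⟨(neg_mem_degSet_iff_of_pos hk).mp hmin, fun m hm => ?_⟩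
    rcases le_or_gt m 0 with hm0 | hm0
    · omega
    · exact le_hInv ((neg_mem_degSet_iff_of_pos hm0).mpr hm)
  · subst hkh
    exact ⟨⟨hk, (neg_mem_degSet_iff_of_nonpos hk).mp hmin⟩,
      fun m ⟨hm0, hm⟩ => le_hInv ((neg_mem_degSet_iff_of_nonpos hm0).mpr hm)⟩
end

section
/- Let F be the field with two elements, let S = F[T₁^{±1}, T₂^{±1}, T₃^{±1}] be the Laurent polynomial ring in three variables over F, and let P = T₁T₂T₃ + T₁⁻¹T₂⁻¹T₃ + T₁⁻¹T₂T₃⁻¹ + T₁T₂⁻¹T₃⁻¹ ∈ S. Then S is a free module over the subring F[T₁^{±1}, P] of S generated by T₁, T₁⁻¹ and P; moreover the set G = {T₂^m : m ∈ ℤ} ∪ {T₃^m : m ∈ ℤ} ∪ {T₂ⁿT₃⁻¹ : n ≥ 1} ∪ {T₂⁻ⁿT₃ : n ≥ 1} ∪ {T₂⁻¹T₃ⁿ : n ≥ 1} ∪ {T₂T₃⁻ⁿ : n ≥ 1} ∪ {T₂T₃} is a basis of S as an F[T₁^{±1}, P]-module. -/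
/-- The field with two elements. -/
abbrev F2 : Type := ZMod 2

/-- The Laurent polynomial ring `F[T₁^{±1}, T₂^{±1}, T₃^{±1}]` in three
variables over the field `F` with two elements, realized as the monoid algebra
on `ℤ × ℤ × ℤ` (the monomial `T₁^a T₂^b T₃^c` corresponds to `(a, b, c)`). -/
abbrev SBN : Type := AddMonoidAlgebra F2 (ℤ × ℤ × ℤ)

/-- The monomial `T₁^a T₂^b T₃^c`. -/
noncomputable def Tmon (k : ℤ × ℤ × ℤ) : SBN := AddMonoidAlgebra.single k 1

/-- `P = T₁T₂T₃ + T₁⁻¹T₂⁻¹T₃ + T₁⁻¹T₂T₃⁻¹ + T₁T₂⁻¹T₃⁻¹`. -/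
noncomputable def Pel : SBN :=
  Tmon (1, 1, 1) + Tmon (-1, -1, 1) + Tmon (-1, 1, -1) + Tmon (1, -1, -1)

/-- The subring `F[T₁^{±1}, P]` of `S` generated by `T₁`, `T₁⁻¹` and `P`
(as an `F`-subalgebra; since `F = {0, 1}`, this coincides with the subring
generated by these elements). -/
noncomputable def FTP : Subalgebra F2 SBN :=
  Algebra.adjoin F2 {Tmon (1, 0, 0), Tmon (-1, 0, 0), Pel}

/-- The set `G = {T₂^m} ∪ {T₃^m} ∪ {T₂ⁿT₃⁻¹ : n ≥ 1} ∪ {T₂⁻ⁿT₃ : n ≥ 1}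
∪ {T₂⁻¹T₃ⁿ : n ≥ 1} ∪ {T₂T₃⁻ⁿ : n ≥ 1} ∪ {T₂T₃}`. -/
def Gset : Set SBN :=
  {x | (∃ m : ℤ, x = Tmon (0, m, 0)) ∨ (∃ m : ℤ, x = Tmon (0, 0, m)) ∨
    (∃ n : ℤ, 1 ≤ n ∧ x = Tmon (0, n, -1)) ∨ (∃ n : ℤ, 1 ≤ n ∧ x = Tmon (0, -n, 1)) ∨
    (∃ n : ℤ, 1 ≤ n ∧ x = Tmon (0, -1, n)) ∨ (∃ n : ℤ, 1 ≤ n ∧ x = Tmon (0, 1, -n)) ∨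
    x = Tmon (0, 1, 1)}

/-!
Filter the monomials `T₁^a T₂^b T₃^c` by the height `3 (|b| + |c|)` plus a tie-break. Multiplying
`T^x` by `P` raises the height of exactly one of the four resulting monomials by 6, the one moving
away from the origin inside the `(b, c)`-quadrant of `x`, and the height of the others by less.
Hence `T₁^a P^j g` is unitriangular: it is `T^(x + j • step)` plus monomials of lower height, where
`T^x = T₁^a g`. This leading exponent is a bijection `G × ℤ × ℕ → ℤ³`, because walking back along
the quadrant step from any exponent ends at a unique exponent of an element of `G`. So the
`T₁^a P^j g` form an `F`-basis of `S`, and since the `T₁^a P^j` span `F[T₁^{±1}, P]` over `F`, the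
set `G` is a basis of `S` over `F[T₁^{±1}, P]`.
-/

open Submodule

namespace Module.Basis

variable {ι κ R M : Type*} [Ring R] [AddCommGroup M] [Module R M] (b : Basis κ R M) (h : κ → ℕ)
  {v : ι → M} {θ : ι → κ}

theorem linearIndependent_of_unitriangular (hθ : Function.Injective θ)
    (hv : ∀ i, v i - b (θ i) ∈ span R (b '' {k | h k < h (θ i)})) : LinearIndependent R v := by
  classical
  rw [linearIndependent_iff]
  intro l hl
  by_contra hl0
  obtain ⟨i₀, hi₀, hmax⟩ :=
    l.support.exists_max_image (h ∘ θ) (Finsupp.support_nonempty_iff.2 hl0)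
  have hcoord (i : ι) (hi : i ∈ l.support) : b.repr (v i) (θ i₀) = if i = i₀ then 1 else 0 := by
    have hlower : b.repr (v i - b (θ i)) (θ i₀) = 0 := by
      by_contra hne
      exact (hmax i hi).not_gt (b.mem_span_image.1 (hv i) (Finsupp.mem_support_iff.2 hne))
    rw [map_sub, Finsupp.sub_apply, repr_self, sub_eq_zero] at hlower
    rw [hlower, Finsupp.single_apply, hθ.eq_iff]
  have hsum := congr(b.repr $hl (θ i₀))
  rw [Finsupp.linearCombination_apply, map_finsuppSum, Finsupp.sum, Finset.sum_apply'] at hsum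
  simp only [map_smul, Finsupp.smul_apply, smul_eq_mul] at hsum
  rw [Finset.sum_congr rfl fun i hi => by rw [hcoord i hi]] at hsum
  simp only [mul_ite, mul_one, mul_zero, Finset.sum_ite_eq', if_pos hi₀, map_zero,
    Finsupp.zero_apply] at hsum
  exact (Finsupp.mem_support_iff.1 hi₀) hsum

theorem span_eq_top_of_unitriangular (hθ : Function.Surjective θ)
    (hv : ∀ i, v i - b (θ i) ∈ span R (b '' {k | h k < h (θ i)})) : span R (Set.range v) = ⊤ := by
  have hlow (n : ℕ) : ∀ k, h k < n → b k ∈ span R (Set.range v) := by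
    induction n with
    | zero => simp
    | succ n ih =>
      intro k hk
      obtain ⟨i, rfl⟩ := hθ k
      have hle : span R (b '' {k | h k < h (θ i)}) ≤ span R (Set.range v) :=
        span_le.2 <| by
          rintro _ ⟨k', hk', rfl⟩
          exact ih k' (lt_of_lt_of_le hk' (Nat.lt_succ_iff.1 hk))
      simpa using sub_mem (subset_span (Set.mem_range_self i)) (hle (hv i))
  rw [eq_top_iff, ← b.span_eq, span_le]
  rintro _ ⟨k, rfl⟩
  exact hlow _ k (Nat.lt_succ_self _)

end Module.Basis

section Tower

variable {ι κ R S M : Type*} [CommSemiring R] [Semiring S] [AddCommMonoid M] [Module R S]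
  [Module S M] [Module R M] [IsScalarTower R S M] {v : ι → M} {w : κ → S}

theorem LinearIndependent.of_smul_of_span_eq_top (hw : span R (Set.range w) = ⊤)
    (hvw : LinearIndependent R fun p : ι × κ => w p.2 • v p.1) : LinearIndependent S v := by
  have hsurj : Function.Surjective (Finsupp.linearCombination R w) :=
    LinearMap.range_eq_top.1 (by rw [Finsupp.range_linearCombination, hw])
  rw [LinearIndependent, Finsupp.linearCombination_smul] at hvw
  exact Function.Injective.of_comp_right hvw <|
    (Finsupp.mapRange_surjective _ (map_zero _) hsurj).comp
      (Finsupp.curryLinearEquiv R).surjective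

theorem Submodule.span_eq_top_of_span_smul_eq_top
    (hvw : span R (Set.range fun p : ι × κ => w p.2 • v p.1) = ⊤) : span S (Set.range v) = ⊤ := by
  rw [← restrictScalars_eq_top_iff R, eq_top_iff, ← hvw, span_le]
  rintro _ ⟨p, rfl⟩
  exact smul_mem _ _ (subset_span (Set.mem_range_self p.1))

end Tower

namespace SBN

theorem Tmon_add (k l : ℤ × ℤ × ℤ) : Tmon (k + l) = Tmon k * Tmon l := by
  simp [Tmon, AddMonoidAlgebra.single_mul_single]

def pelExponents : Finset (ℤ × ℤ × ℤ) := {(1, 1, 1), (-1, -1, 1), (-1, 1, -1), (1, -1, -1)}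

theorem Pel_mul_Tmon (x : ℤ × ℤ × ℤ) : Pel * Tmon x = ∑ δ ∈ pelExponents, Tmon (x + δ) := by
  rw [pelExponents, Finset.sum_insert (by simp), Finset.sum_insert (by simp),
    Finset.sum_pair (by simp)]
  simp only [Pel, add_mul, ← Tmon_add, add_comm x, add_assoc]

-- `3 (|b| + |c|)` plus a tie-break chosen so that, of the four monomials of `P * T^x`, only
-- `T^(x + leadStep x)` gains the full 6.
def height (x : ℤ × ℤ × ℤ) : ℕ :=
  3 * (x.2.1.natAbs + x.2.2.natAbs) +
    if x.2.1 ≤ 0 ∧ x.2.2 ≤ 0 then 2 else if 0 ≤ x.2.1 ∧ 0 ≤ x.2.2 then 1 else 0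

-- The exponent of `P` pointing away from the origin in the closed `(b, c)`-quadrant of `x`; the
-- axes are shared out so that each region is stable under its own step.
def leadStep (x : ℤ × ℤ × ℤ) : ℤ × ℤ × ℤ :=
  if 1 ≤ x.2.1 ∧ x.2.2 ≤ -1 then (-1, 1, -1)
  else if x.2.1 ≤ -1 ∧ 1 ≤ x.2.2 then (-1, -1, 1)
  else if x.2.1 ≤ 0 ∧ x.2.2 ≤ 0 then (1, -1, -1)
  else (1, 1, 1)

theorem leadStep_cases (a b c : ℤ) :
    1 ≤ b ∧ c ≤ -1 ∧ leadStep (a, b, c) = (-1, 1, -1) ∨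
    b ≤ -1 ∧ 1 ≤ c ∧ leadStep (a, b, c) = (-1, -1, 1) ∨
    b ≤ 0 ∧ c ≤ 0 ∧ leadStep (a, b, c) = (1, -1, -1) ∨
    0 ≤ b ∧ 0 ≤ c ∧ 1 ≤ b + c ∧ leadStep (a, b, c) = (1, 1, 1) := by
  simp only [leadStep]
  split_ifs <;> simp only [Prod.mk.injEq, and_true, true_and] <;> omega

theorem leadStep_mem_pelExponents (x : ℤ × ℤ × ℤ) : leadStep x ∈ pelExponents := by
  unfold leadStep; split_ifs <;> simp [pelExponents]

theorem height_add_le {δ : ℤ × ℤ × ℤ} (hδ : δ ∈ pelExponents) (x : ℤ × ℤ × ℤ) :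
    height (x + δ) ≤ height x + 6 := by
  simp only [pelExponents, Finset.mem_insert, Finset.mem_singleton] at hδ
  obtain ⟨a, b, c⟩ := x
  rcases hδ with rfl | rfl | rfl | rfl <;>
    (simp only [height, Prod.mk_add_mk]; split_ifs <;> omega)

theorem height_add_lt {δ : ℤ × ℤ × ℤ} (hδ : δ ∈ pelExponents) {x : ℤ × ℤ × ℤ}
    (hne : δ ≠ leadStep x) :
    height (x + δ) < height x + 6 := by
  simp only [pelExponents, Finset.mem_insert, Finset.mem_singleton] at hδ
  obtain ⟨a, b, c⟩ := x
  rcases leadStep_cases a b c with ⟨_, _, hd⟩ | ⟨_, _, hd⟩ | ⟨_, _, hd⟩ | ⟨_, _, _, hd⟩ <;>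
    rw [hd] at hne <;> rcases hδ with rfl | rfl | rfl | rfl <;>
    first | exact absurd rfl hne | (simp only [height, Prod.mk_add_mk]; split_ifs <;> omega)

theorem height_add_leadStep (x : ℤ × ℤ × ℤ) : height (x + leadStep x) = height x + 6 := by
  obtain ⟨a, b, c⟩ := x
  rcases leadStep_cases a b c with ⟨_, _, hd⟩ | ⟨_, _, hd⟩ | ⟨_, _, hd⟩ | ⟨_, _, _, hd⟩ <;>
    (rw [hd]; simp only [height, Prod.mk_add_mk]; split_ifs <;> omega)

theorem leadStep_add_smul_leadStep (x : ℤ × ℤ × ℤ) (j : ℕ) :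
    leadStep (x + (j : ℤ) • leadStep x) = leadStep x := by
  obtain ⟨a, b, c⟩ := x
  rcases leadStep_cases a b c with ⟨_, _, hd⟩ | ⟨_, _, hd⟩ | ⟨_, _, hd⟩ | ⟨_, _, _, hd⟩ <;>
    (rw [hd]; simp only [leadStep, Prod.smul_mk, smul_eq_mul, Prod.mk_add_mk]
     split_ifs <;> first | rfl | omega)

noncomputable def lowerSpan (n : ℕ) : Submodule F2 SBN :=
  span F2 (Tmon '' {k | height k < n})

theorem Tmon_mem_lowerSpan {n : ℕ} {k : ℤ × ℤ × ℤ} (hk : height k < n) :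
    Tmon k ∈ lowerSpan n :=
  subset_span ⟨k, hk, rfl⟩

theorem Pel_mul_mem_lowerSpan {n : ℕ} {f : SBN} (hf : f ∈ lowerSpan n) :
    Pel * f ∈ lowerSpan (n + 6) := by
  suffices lowerSpan n ≤ (lowerSpan (n + 6)).comap (LinearMap.mulLeft F2 Pel) from this hf
  refine span_le.2 ?_
  rintro _ ⟨k, hk, rfl⟩
  rw [SetLike.mem_coe, mem_comap, LinearMap.mulLeft_apply, Pel_mul_Tmon]
  exact sum_mem fun δ hδ =>
    Tmon_mem_lowerSpan ((height_add_le hδ k).trans_lt (by simpa using hk))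

theorem Pel_mul_Tmon_sub_mem (x : ℤ × ℤ × ℤ) :
    Pel * Tmon x - Tmon (x + leadStep x) ∈ lowerSpan (height x + 6) := by
  rw [Pel_mul_Tmon, ← Finset.sum_erase_add _ _ (leadStep_mem_pelExponents x),
    add_sub_cancel_right]
  exact sum_mem fun δ hδ => Tmon_mem_lowerSpan
    (height_add_lt (Finset.mem_of_mem_erase hδ) (Finset.ne_of_mem_erase hδ))

theorem Pel_pow_mul_Tmon_sub_mem (j : ℕ) (x : ℤ × ℤ × ℤ) :
    Pel ^ j * Tmon x - Tmon (x + (j : ℤ) • leadStep x) ∈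
      lowerSpan (height (x + (j : ℤ) • leadStep x)) := by
  induction j with
  | zero => simp
  | succ j ih =>
    set y := x + (j : ℤ) • leadStep x
    have hy : x + ((j + 1 : ℕ) : ℤ) • leadStep x = y + leadStep y := by
      rw [leadStep_add_smul_leadStep, Nat.cast_succ, add_smul, one_smul, add_assoc]
    rw [hy, height_add_leadStep]
    convert add_mem (Pel_mul_mem_lowerSpan ih) (Pel_mul_Tmon_sub_mem y) using 1
    ring

def GExp : Set (ℤ × ℤ) :=
  {e | e.2 = 0 ∨ e.1 = 0 ∨ (1 ≤ e.1 ∧ e.2 = -1) ∨ (e.1 ≤ -1 ∧ e.2 = 1) ∨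
    (e.1 = -1 ∧ 1 ≤ e.2) ∨ (e.1 = 1 ∧ e.2 ≤ -1) ∨ (e.1 = 1 ∧ e.2 = 1)}

theorem leadStep_sub_leadStep {x : ℤ × ℤ × ℤ} (hx : x.2 ∉ GExp) :
    leadStep (x - leadStep x) = leadStep x := by
  obtain ⟨a, b, c⟩ := x
  simp only [GExp, Set.mem_ofPred_eq] at hx
  rcases leadStep_cases a b c with ⟨_, _, hd⟩ | ⟨_, _, hd⟩ | ⟨_, _, hd⟩ | ⟨_, _, _, hd⟩ <;>
    (rw [hd]; simp only [leadStep, Prod.mk_sub_mk]; split_ifs <;> first | rfl | omega)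

theorem exists_add_smul_leadStep_eq (x : ℤ × ℤ × ℤ) :
    ∃ y : ℤ × ℤ × ℤ, y.2 ∈ GExp ∧ ∃ j : ℕ, y + (j : ℤ) • leadStep y = x := by
  induction hn : height x using Nat.strong_induction_on generalizing x with
  | _ n ih =>
  by_cases hx : x.2 ∈ GExp
  · exact ⟨x, hx, 0, by simp⟩
  set x' := x - leadStep x
  have hx' : x' + leadStep x' = x := by rw [leadStep_sub_leadStep hx, sub_add_cancel]
  have hlt : height x' < n := by
    have := height_add_leadStep x'
    rw [hx'] at this
    omega
  obtain ⟨y, hy, j, hyj⟩ := ih _ hlt x' rfl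
  have hstep : leadStep y = leadStep x' := by rw [← hyj, leadStep_add_smul_leadStep]
  refine ⟨y, hy, j + 1, ?_⟩
  rw [Nat.cast_succ, add_smul, one_smul, ← add_assoc, hyj, hstep, hx']

theorem add_smul_leadStep_inj {y y' : ℤ × ℤ × ℤ} (hy : y.2 ∈ GExp) (hy' : y'.2 ∈ GExp) {j j' : ℕ}
    (h : y + (j : ℤ) • leadStep y = y' + (j' : ℤ) • leadStep y') : y = y' ∧ j = j' := by
  obtain ⟨a, b, c⟩ := y
  obtain ⟨a', b', c'⟩ := y'
  simp only [GExp, Set.mem_ofPred_eq] at hy hy'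
  rcases leadStep_cases a b c with ⟨_, _, hd⟩ | ⟨_, _, hd⟩ | ⟨_, _, hd⟩ | ⟨_, _, _, hd⟩ <;>
  rcases leadStep_cases a' b' c' with ⟨_, _, hd'⟩ | ⟨_, _, hd'⟩ | ⟨_, _, hd'⟩ | ⟨_, _, _, hd'⟩ <;>
  (rw [hd, hd'] at h
   simp only [Prod.smul_mk, smul_eq_mul, Prod.mk_add_mk, Prod.mk.injEq] at h ⊢
   omega)

theorem Tmon_zero : Tmon (0, 0, 0) = 1 := rfl

theorem Tmon_fst_mem_FTP (a : ℤ) : Tmon (a, 0, 0) ∈ FTP := by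
  have h₁ : Tmon (1, 0, 0) ∈ FTP := Algebra.subset_adjoin (by simp)
  have hinv : Tmon (-1, 0, 0) ∈ FTP := Algebra.subset_adjoin (by simp)
  induction a using Int.induction_on with
  | zero => exact one_mem FTP
  | succ n ih => simpa [← Tmon_add] using mul_mem ih h₁
  | pred n ih => simpa [← Tmon_add, sub_eq_add_neg] using mul_mem ih hinv

theorem Pel_mem_FTP : Pel ∈ FTP := Algebra.subset_adjoin (by simp)

noncomputable def ftpMonomial (q : ℤ × ℕ) : SBN := Tmon (q.1, 0, 0) * Pel ^ q.2

theorem ftpMonomial_mem (q : ℤ × ℕ) : ftpMonomial q ∈ FTP :=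
  mul_mem (Tmon_fst_mem_FTP q.1) (pow_mem Pel_mem_FTP q.2)

theorem ftpMonomial_mul (q r : ℤ × ℕ) : ftpMonomial q * ftpMonomial r = ftpMonomial (q + r) := by
  simp only [ftpMonomial, Prod.fst_add, Prod.snd_add, pow_add]
  rw [show ((q.1 + r.1, 0, 0) : ℤ × ℤ × ℤ) = (q.1, 0, 0) + (r.1, 0, 0) by simp, Tmon_add]
  ring

theorem FTP_le_span_ftpMonomial :
    Subalgebra.toSubmodule FTP ≤ span F2 (Set.range ftpMonomial) := by
  set W := span F2 (Set.range ftpMonomial)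
  have hone : (1 : SBN) ∈ W := subset_span ⟨0, by simp [ftpMonomial, Tmon_zero]⟩
  have hmul (x y : SBN) (hx : x ∈ W) (hy : y ∈ W) : x * y ∈ W := by
    have hxy : x * y ∈ W * W := mul_mem_mul hx hy
    rw [span_mul_span] at hxy
    refine span_mono ?_ hxy
    rintro _ ⟨_, ⟨q, rfl⟩, _, ⟨r, rfl⟩, rfl⟩
    exact ⟨q + r, (ftpMonomial_mul q r).symm⟩
  refine Algebra.adjoin_le (S := W.toSubalgebra hone hmul) ?_
  rintro _ (rfl | rfl | rfl)
  · exact subset_span ⟨(1, 0), by simp [ftpMonomial]⟩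
  · exact subset_span ⟨(-1, 0), by simp [ftpMonomial]⟩
  · exact subset_span ⟨(0, 1), by simp [ftpMonomial, Tmon_zero]⟩

noncomputable def ftpGen (q : ℤ × ℕ) : FTP := ⟨ftpMonomial q, ftpMonomial_mem q⟩

theorem span_range_ftpGen : span F2 (Set.range ftpGen) = ⊤ := by
  refine eq_top_iff.2 fun x _ => ?_
  obtain ⟨c, hc⟩ := Finsupp.mem_span_range_iff_exists_finsupp.1 (FTP_le_span_ftpMonomial x.2)
  refine Finsupp.mem_span_range_iff_exists_finsupp.2 ⟨c, Subtype.ext ?_⟩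
  simp [← hc, Finsupp.sum, ftpGen]

noncomputable def monomialBasis : Module.Basis (ℤ × ℤ × ℤ) F2 SBN :=
  AddMonoidAlgebra.basis _ F2

theorem coe_monomialBasis : ⇑monomialBasis = Tmon := rfl

def leadExp (p : GExp × (ℤ × ℕ)) : ℤ × ℤ × ℤ :=
  let x : ℤ × ℤ × ℤ := (p.2.1, p.1)
  x + (p.2.2 : ℤ) • leadStep x

theorem leadExp_injective : Function.Injective leadExp := by
  rintro ⟨e, a, j⟩ ⟨e', a', j'⟩ h
  obtain ⟨hy, rfl : j = j'⟩ := add_smul_leadStep_inj (y := (a, e)) (y' := (a', e')) e.2 e'.2 h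
  obtain ⟨rfl, he⟩ := Prod.mk.inj hy
  rw [Subtype.ext he]

theorem leadExp_surjective : Function.Surjective leadExp := by
  intro x
  obtain ⟨⟨a, e⟩, he, j, rfl⟩ := exists_add_smul_leadStep_eq x
  exact ⟨(⟨e, he⟩, a, j), rfl⟩

theorem ftpGen_smul_Tmon (a : ℤ) (j : ℕ) (e : ℤ × ℤ) :
    ftpGen (a, j) • Tmon (0, e) = Pel ^ j * Tmon (a, e) := by
  change ftpMonomial (a, j) * Tmon (0, e) = _
  rw [ftpMonomial, mul_right_comm, ← Tmon_add, mul_comm, Prod.mk_add_mk, add_zero,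
    Prod.mk_zero_zero, zero_add]

theorem ftpGen_smul_Tmon_sub_mem (p : GExp × (ℤ × ℕ)) :
    ftpGen p.2 • Tmon (0, p.1) - monomialBasis (leadExp p) ∈
      span F2 (monomialBasis '' {k | height k < height (leadExp p)}) := by
  rw [coe_monomialBasis, ftpGen_smul_Tmon]
  exact Pel_pow_mul_Tmon_sub_mem _ _

theorem Tmon_injective : Function.Injective Tmon :=
  AddMonoidAlgebra.single_left_injective one_ne_zero

theorem Gset_eq_image : Gset = (fun e : ℤ × ℤ => Tmon (0, e)) '' GExp := by
  ext x
  constructor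
  · rintro (⟨m, rfl⟩ | ⟨m, rfl⟩ | ⟨n, hn, rfl⟩ | ⟨n, hn, rfl⟩ | ⟨n, hn, rfl⟩ | ⟨n, hn, rfl⟩ |
        rfl) <;>
      refine ⟨_, ?_, rfl⟩ <;>
      simp only [GExp, Set.mem_ofPred_eq, true_or, or_true, and_true, true_and] <;> omega
  · rintro ⟨⟨b, c⟩, hbc, rfl⟩
    simp only [GExp, Set.mem_ofPred_eq] at hbc
    rcases hbc with rfl | rfl | ⟨hb, rfl⟩ | ⟨hb, rfl⟩ | ⟨rfl, hc⟩ | ⟨rfl, hc⟩ | ⟨rfl, rfl⟩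
    · exact Or.inl ⟨b, rfl⟩
    · exact Or.inr <| Or.inl ⟨c, rfl⟩
    · exact Or.inr <| Or.inr <| Or.inl ⟨b, hb, rfl⟩
    · exact Or.inr <| Or.inr <| Or.inr <| Or.inl ⟨-b, by omega, by rw [neg_neg]⟩
    · exact Or.inr <| Or.inr <| Or.inr <| Or.inr <| Or.inl ⟨c, hc, rfl⟩
    · exact Or.inr <| Or.inr <| Or.inr <| Or.inr <| Or.inr <| Or.inl
        ⟨-c, by omega, by rw [neg_neg]⟩
    · exact Or.inr <| Or.inr <| Or.inr <| Or.inr <| Or.inr <| Or.inr rfl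

noncomputable def gExpEquiv : GExp ≃ Gset :=
  (Equiv.Set.image (fun e : ℤ × ℤ => Tmon (0, e)) GExp
    (Tmon_injective.comp (Prod.mk_right_injective 0))).trans
    (Equiv.setCongr Gset_eq_image.symm)

theorem coe_gExpEquiv (e : GExp) : (gExpEquiv e : SBN) = Tmon (0, e) := rfl

theorem linearIndependent_Tmon_GExp : LinearIndependent FTP fun e : GExp => Tmon (0, e) :=
  (monomialBasis.linearIndependent_of_unitriangular height leadExp_injective
    ftpGen_smul_Tmon_sub_mem).of_smul_of_span_eq_top span_range_ftpGen

theorem span_Tmon_GExp : span FTP (Set.range fun e : GExp => Tmon (0, e)) = ⊤ :=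
  span_eq_top_of_span_smul_eq_top (w := ftpGen)
    (monomialBasis.span_eq_top_of_unitriangular height leadExp_surjective
      ftpGen_smul_Tmon_sub_mem)

noncomputable def basisGExp : Module.Basis GExp FTP SBN :=
  .mk linearIndependent_Tmon_GExp span_Tmon_GExp.ge

theorem basisGExp_apply (e : GExp) : basisGExp e = Tmon (0, e) :=
  Module.Basis.mk_apply _ _ e

end SBN

/-- `S = F[T₁^{±1}, T₂^{±1}, T₃^{±1}]` is a free module over
its subring `F[T₁^{±1}, P]`, and the set `G` is a basis. -/
theorem statement12 :
    Module.Free ↥FTP SBN ∧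
    ∃ b : Module.Basis ↥Gset ↥FTP SBN, ∀ g : ↥Gset, b g = (g : SBN) := by
  let b := SBN.basisGExp.reindex SBN.gExpEquiv
  refine ⟨.of_basis b, b, fun g => ?_⟩
  rw [Module.Basis.reindex_apply, SBN.basisGExp_apply, ← SBN.coe_gExpEquiv,
    Equiv.apply_symm_apply]
end

section
/- Let p ≥ 1 and k₁, k₂ ≥ 1 be integers and let q ∈ ℤ. Define N₁(k₁, k₂; p, q) = #{(a, b) ∈ ℤ² : a + qb ≡ 0 (mod p), |a| < k₁, |b| < k₂} and N₂(k₁, k₂; p, q) = #{(a, b) ∈ ℤ² : a + qb ≡ 0 (mod p), and either (|a| < k₁ and |b| = k₂) or (|a| = k₁ and |b| < k₂)}. Then N₁(k₁, k₂; p, q) is odd and N₂(k₁, k₂; p, q) is even. -/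
/-!
Negation `(a, b) ↦ (-a, -b)` preserves both sets of solutions, and its only fixed point is
`(0, 0)`. So the solutions other than `(0, 0)` fall into pairs `{x, -x}`, and the parity of each
count is decided by whether `(0, 0)` is counted: it is in the first set and not in the second.
-/

open Function

namespace Set

theorem even_ncard_of_involutive {α : Type*} {s : Set α} {g : α → α} (hs : s.Finite)
    (hg : Involutive g) (hmaps : MapsTo g s s) (hfree : ∀ x ∈ s, g x ≠ x) : Even s.ncard := by
  rw [ncard_eq_toFinset_card s hs, ← ZMod.natCast_eq_zero_iff_even, Finset.card_eq_sum_ones,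
    Nat.cast_sum, Nat.cast_one]
  exact Finset.sum_involution (fun x _ ↦ g x) (fun _ _ ↦ by decide)
    (fun x hx _ ↦ hfree x (hs.mem_toFinset.1 hx))
    (fun x hx ↦ hs.mem_toFinset.2 (hmaps (hs.mem_toFinset.1 hx))) (fun x _ ↦ hg x)

variable {G : Type*} [AddGroup G] [IsAddTorsionFree G] {s : Set G}

theorem even_ncard_of_neg_mem (hs : s.Finite) (hneg : ∀ x ∈ s, -x ∈ s) (h0 : 0 ∉ s) :
    Even s.ncard :=
  even_ncard_of_involutive hs neg_neg hneg fun _ hx hfix ↦ h0 (neg_eq_self.1 hfix ▸ hx)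

theorem odd_ncard_of_neg_mem (hs : s.Finite) (hneg : ∀ x ∈ s, -x ∈ s) (h0 : 0 ∈ s) :
    Odd s.ncard := by
  rw [← ncard_sdiff_singleton_add_one h0 hs]
  have hneg' : ∀ x ∈ s \ {0}, -x ∈ s \ {0} := fun x hx ↦
    ⟨hneg x hx.1, by simpa only [mem_singleton_iff, neg_eq_zero] using hx.2⟩
  exact (even_ncard_of_neg_mem hs.sdiff hneg' fun h ↦ h.2 rfl).add_one

end Set

def absSolutions (p q : ℤ) (R : ℤ → ℤ → Prop) : Set (ℤ × ℤ) :=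
  {ab | p ∣ ab.1 + q * ab.2 ∧ R |ab.1| |ab.2|}

section absSolutions

variable {p q : ℤ} {R : ℤ → ℤ → Prop}

theorem neg_mem_absSolutions {x : ℤ × ℤ} (hx : x ∈ absSolutions p q R) :
    -x ∈ absSolutions p q R := by
  obtain ⟨hdvd, hR⟩ := hx
  refine ⟨?_, by simpa only [Prod.fst_neg, Prod.snd_neg, abs_neg] using hR⟩
  rw [Prod.fst_neg, Prod.snd_neg, mul_neg, ← neg_add]
  exact hdvd.neg_right

theorem absSolutions_finite {k₁ k₂ : ℤ} (hR : ∀ a b, R a b → a ≤ k₁ ∧ b ≤ k₂) :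
    (absSolutions p q R).Finite := by
  refine ((Set.finite_Icc (-k₁) k₁).prod (Set.finite_Icc (-k₂) k₂)).subset ?_
  rintro ⟨a, b⟩ ⟨-, hab⟩
  obtain ⟨ha, hb⟩ := hR _ _ hab
  exact ⟨abs_le.1 ha, abs_le.1 hb⟩

theorem zero_mem_absSolutions_iff : (0 : ℤ × ℤ) ∈ absSolutions p q R ↔ R 0 0 := by
  simp [absSolutions]

end absSolutions

theorem statement13_general (p k₁ k₂ q : ℤ) (hk₁ : 1 ≤ k₁) (hk₂ : 1 ≤ k₂) :
    Odd (Set.ncard {ab : ℤ × ℤ | p ∣ (ab.1 + q * ab.2) ∧ |ab.1| < k₁ ∧ |ab.2| < k₂}) ∧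
    Even (Set.ncard {ab : ℤ × ℤ | p ∣ (ab.1 + q * ab.2) ∧
      ((|ab.1| < k₁ ∧ |ab.2| = k₂) ∨ (|ab.1| = k₁ ∧ |ab.2| < k₂))}) := by
  set R₁ : ℤ → ℤ → Prop := fun a b ↦ a < k₁ ∧ b < k₂
  set R₂ : ℤ → ℤ → Prop := fun a b ↦ (a < k₁ ∧ b = k₂) ∨ (a = k₁ ∧ b < k₂)
  change Odd (absSolutions p q R₁).ncard ∧ Even (absSolutions p q R₂).ncard
  have hR₁ : ∀ a b, R₁ a b → a ≤ k₁ ∧ b ≤ k₂ := fun _ _ h ↦ ⟨h.1.le, h.2.le⟩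
  have hR₂ : ∀ a b, R₂ a b → a ≤ k₁ ∧ b ≤ k₂ := by
    rintro a b (⟨ha, rfl⟩ | ⟨rfl, hb⟩)
    exacts [⟨ha.le, le_rfl⟩, ⟨le_rfl, hb.le⟩]
  refine ⟨Set.odd_ncard_of_neg_mem (absSolutions_finite hR₁) (fun _ ↦ neg_mem_absSolutions)
    (zero_mem_absSolutions_iff.2 ⟨by omega, by omega⟩),
    Set.even_ncard_of_neg_mem (absSolutions_finite hR₂) (fun _ ↦ neg_mem_absSolutions) ?_⟩
  rw [zero_mem_absSolutions_iff]
  rintro (⟨-, h⟩ | ⟨h, -⟩) <;> omega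

/-- **Statement 13.** Let `p ≥ 1`, `k₁, k₂ ≥ 1` be integers and `q ∈ ℤ`.  Then
the number `N₁(k₁, k₂; p, q)` of integer solutions `(a, b)` of
`a + qb ≡ 0 (mod p)` with `|a| < k₁`, `|b| < k₂` is odd, and the number
`N₂(k₁, k₂; p, q)` of solutions with (`|a| < k₁` and `|b| = k₂`) or
(`|a| = k₁` and `|b| < k₂`) is even. -/
theorem statement13 (p k₁ k₂ q : ℤ) (hp : 1 ≤ p) (hk₁ : 1 ≤ k₁) (hk₂ : 1 ≤ k₂) :
    Odd (Set.ncard {ab : ℤ × ℤ | p ∣ (ab.1 + q * ab.2) ∧ |ab.1| < k₁ ∧ |ab.2| < k₂}) ∧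
    Even (Set.ncard {ab : ℤ × ℤ | p ∣ (ab.1 + q * ab.2) ∧
      ((|ab.1| < k₁ ∧ |ab.2| = k₂) ∨ (|ab.1| = k₁ ∧ |ab.2| < k₂))}) :=
  statement13_general p k₁ k₂ q hk₁ hk₂
end

section
/- Let p ≥ 1 and k₁, k₂ ≥ 1 be integers and let q ∈ ℤ, and suppose N₁(k₁, k₂; p, q) = 1, i.e. (a, b) = (0, 0) is the only integer solution of a + qb ≡ 0 (mod p) with |a| < k₁ and |b| < k₂. Then the number of pairs (c, d) ∈ ℤ² with 0 ≤ c ≤ k₁ − 1, 0 ≤ d ≤ k₂ − 1 and (2c + 1 − k₁) + q(2d + 1 − k₂) ≡ 0 (mod 2p) equals 1 if k₁k₂ is odd, and equals 0 if k₁k₂ is even. -/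
/-- **Statement 14.** Let `p ≥ 1`, `k₁, k₂ ≥ 1` be integers and `q ∈ ℤ`, and
suppose `N₁(k₁, k₂; p, q) = 1`, i.e. `(a, b) = (0, 0)` is the only integer
solution of `a + qb ≡ 0 (mod p)` with `|a| < k₁` and `|b| < k₂`.  Then the
number of pairs `(c, d) ∈ ℤ²` with `0 ≤ c ≤ k₁ − 1`, `0 ≤ d ≤ k₂ − 1` and
`(2c + 1 − k₁) + q(2d + 1 − k₂) ≡ 0 (mod 2p)` equals `1` if `k₁k₂` is odd and
`0` if `k₁k₂` is even. -/
theorem statement14 (p k₁ k₂ q : ℤ) (hp : 1 ≤ p) (hk₁ : 1 ≤ k₁) (hk₂ : 1 ≤ k₂)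
    (h : ∀ a b : ℤ, p ∣ (a + q * b) → |a| < k₁ → |b| < k₂ → a = 0 ∧ b = 0) :
    Set.ncard {cd : ℤ × ℤ | 0 ≤ cd.1 ∧ cd.1 ≤ k₁ - 1 ∧ 0 ≤ cd.2 ∧ cd.2 ≤ k₂ - 1 ∧
        (2 * p) ∣ ((2 * cd.1 + 1 - k₁) + q * (2 * cd.2 + 1 - k₂))} =
      if Odd (k₁ * k₂) then 1 else 0 := by
  have key : ∀ c d : ℤ, 0 ≤ c → c ≤ k₁ - 1 → 0 ≤ d → d ≤ k₂ - 1 →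
      (2 * p) ∣ ((2 * c + 1 - k₁) + q * (2 * d + 1 - k₂)) →
      2 * c + 1 = k₁ ∧ 2 * d + 1 = k₂ := by
    intro c d hc0 hc1 hd0 hd1 hdvd
    have hp' : p ∣ ((2 * c + 1 - k₁) + q * (2 * d + 1 - k₂)) :=
      dvd_trans (dvd_mul_left p 2) hdvd
    have := h _ _ hp' (abs_lt.mpr ⟨by omega, by omega⟩) (abs_lt.mpr ⟨by omega, by omega⟩)
    omega
  by_cases hodd : Odd (k₁ * k₂)
  · rw [if_pos hodd]
    obtain ⟨hk1, hk2⟩ := Int.odd_mul.mp hodd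
    obtain ⟨m, hm⟩ := hk1
    obtain ⟨n, hn⟩ := hk2
    have hset : {cd : ℤ × ℤ | 0 ≤ cd.1 ∧ cd.1 ≤ k₁ - 1 ∧ 0 ≤ cd.2 ∧ cd.2 ≤ k₂ - 1 ∧
        (2 * p) ∣ ((2 * cd.1 + 1 - k₁) + q * (2 * cd.2 + 1 - k₂))} = {(m, n)} := by
      ext ⟨c, d⟩
      simp only [Set.mem_setOf_eq, Set.mem_singleton_iff, Prod.mk.injEq]
      constructor
      · rintro ⟨hc0, hc1, hd0, hd1, hdvd⟩
        have := key c d hc0 hc1 hd0 hd1 hdvd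
        omega
      · rintro ⟨hc, hd⟩
        refine ⟨by omega, by omega, by omega, by omega, ?_⟩
        have h1 : 2 * c + 1 - k₁ = 0 := by omega
        have h2 : 2 * d + 1 - k₂ = 0 := by omega
        rw [h1, h2]
        simp
    rw [hset, Set.ncard_singleton]
  · rw [if_neg hodd]
    have hset : {cd : ℤ × ℤ | 0 ≤ cd.1 ∧ cd.1 ≤ k₁ - 1 ∧ 0 ≤ cd.2 ∧ cd.2 ≤ k₂ - 1 ∧
        (2 * p) ∣ ((2 * cd.1 + 1 - k₁) + q * (2 * cd.2 + 1 - k₂))} = ∅ := by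
      ext ⟨c, d⟩
      simp only [Set.mem_setOf_eq, Set.mem_empty_iff_false, iff_false]
      rintro ⟨hc0, hc1, hd0, hd1, hdvd⟩
      have := key c d hc0 hc1 hd0 hd1 hdvd
      exact hodd (Int.odd_mul.mpr ⟨⟨c, by omega⟩, ⟨d, by omega⟩⟩)
    rw [hset, Set.ncard_empty]
end
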